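/- arXiv:2406.15916 — 2 statements merged into one kernel-verified Lean document; each statement's English description precedes it below -/
import Mathlib

section
/- Let A : {0,1}^n → [n]^k be an (ε,δ)-differentially private selection mechanism, let p ∈ (0,1), and let D be the product distribution on {0,1}^n in which each coordinate independently equals 1 with probability p. For X ~ D and I = (I_1,…,I_k) = A(X), let Z = (1/k)·Σ_{j=1}^k 1[X_{I_j} = 1] be the fraction of selected coordinates at which X equals 1, with expectation taken over both X and the internal randomness of A. Then (p − n·p·(1−p)·δ)/(p + (1−p)·e^ε) ≤ E[Z] ≤ (p·e^ε + n·p·(1−p)·δ)/(1 − p + p·e^ε). -/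
open MeasureTheory Finset

/-- The probability that a sample from the PMF `μ` lands in the set `T`. -/
noncomputable def prob {α : Type*} (μ : PMF α) (T : Set α) : ℝ :=
  (μ.toOuterMeasure T).toReal

/-- Two inputs are neighbors if they differ in exactly one coordinate. -/
def Neighbors {Z : Type*} {n : ℕ} (x x' : Fin n → Z) : Prop :=
  ∃ i, x i ≠ x' i ∧ ∀ j, j ≠ i → x j = x' j

/-- Probability of the string `x` under the product Bernoulli(p) distribution. -/
noncomputable def weight {n : ℕ} (p : ℝ) (x : Fin n → Bool) : ℝ :=
  ∏ i, if x i then p else 1 - p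

lemma prob_eq_sum {α} [Fintype α] (μ : PMF α) (T : Set α) [DecidablePred (· ∈ T)] :
    prob μ T = ∑ a, if a ∈ T then (μ a).toReal else 0 := by
  rw [prob, PMF.toOuterMeasure_apply, tsum_fintype, ENNReal.toReal_sum]
  · refine Finset.sum_congr rfl fun a _ => ?_
    by_cases h : a ∈ T <;> simp [Set.indicator, h]
  · intro a _
    by_cases h : a ∈ T <;> simp [Set.indicator, h, PMF.apply_ne_top]

lemma sum_pmf_toReal {α} [Fintype α] (μ : PMF α) : ∑ a, (μ a).toReal = 1 := by
  have h := μ.tsum_coe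
  rw [tsum_fintype] at h
  rw [← ENNReal.toReal_sum (fun a _ => PMF.apply_ne_top μ a), h, ENNReal.toReal_one]

lemma prod_form {n : ℕ} (h : Fin n → Bool → ℝ) :
    ∑ x : Fin n → Bool, ∏ i, h i (x i) = ∏ i, (h i true + h i false) := by
  rw [← Fintype.piFinset_univ, ← Finset.prod_univ_sum]
  refine Finset.prod_congr rfl fun i _ => ?_
  simp [Fintype.sum_bool]

lemma sum_weight {n : ℕ} (p : ℝ) : ∑ x : Fin n → Bool, weight p x = 1 := by
  have := prod_form (n := n) (fun _ b => if b then p else 1 - p)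
  simp only [weight] at *
  rw [this]
  simp

lemma weight_nonneg {n : ℕ} {p : ℝ} (hp0 : 0 ≤ p) (hp1 : p ≤ 1) (x : Fin n → Bool) :
    0 ≤ weight p x := by
  refine Finset.prod_nonneg fun i _ => ?_
  by_cases h : x i <;> simp [h] <;> linarith

lemma marg_true {n : ℕ} (p : ℝ) (i : Fin n) :
    ∑ x : Fin n → Bool, (if x i then weight p x else 0) = p := by
  have key : ∀ x : Fin n → Bool, (if x i then weight p x else 0)
      = ∏ j, (fun j b => if j = i then (if b then p else 0) else (if b then p else 1 - p)) j (x j) := by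
    intro x
    rw [weight, ← Finset.mul_prod_erase univ _ (mem_univ i),
        ← Finset.mul_prod_erase univ (fun j => (fun j b => if j = i then (if b then p else 0) else (if b then p else 1 - p)) j (x j)) (mem_univ i)]
    have : ∏ j ∈ univ.erase i, (if j = i then (if x j then p else 0) else (if x j then p else 1 - p))
        = ∏ j ∈ univ.erase i, (if x j then p else 1 - p) := by
      refine Finset.prod_congr rfl fun j hj => ?_
      simp [(Finset.mem_erase.mp hj).1]
    rw [this]
    by_cases h : x i <;> simp [h, Finset.mul_prod_erase]
  rw [Finset.sum_congr rfl (fun x _ => key x), prod_form (fun j b => if j = i then (if b then p else 0) else (if b then p else 1 - p))]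
  rw [← Finset.mul_prod_erase univ _ (mem_univ i)]
  have : ∏ j ∈ univ.erase i, ((if j = i then (if (true:Bool) then p else 0) else (if (true:Bool) then p else 1 - p)) + (if j = i then (if (false:Bool) then p else 0) else (if (false:Bool) then p else 1 - p))) = 1 := by
    refine Finset.prod_eq_one fun j hj => ?_
    simp [(Finset.mem_erase.mp hj).1]
  rw [this]
  simp

lemma marg_false {n : ℕ} (p : ℝ) (i : Fin n) :
    ∑ x : Fin n → Bool, (if x i then 0 else weight p x) = 1 - p := by
  have h1 := sum_weight (n := n) p
  have h2 := marg_true (n := n) p i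
  have h3 : ∑ x : Fin n → Bool, ((if x i then weight p x else 0) + (if x i then 0 else weight p x)) = 1 := by
    refine Eq.trans (Finset.sum_congr rfl fun x _ => ?_) h1
    by_cases h : x i <;> simp [h]
  rw [Finset.sum_add_distrib, h2] at h3
  linarith

def bflip {n : ℕ} (i : Fin n) (x : Fin n → Bool) : Fin n → Bool :=
  Function.update x i (!x i)

lemma bflip_apply_self {n : ℕ} (i : Fin n) (x : Fin n → Bool) : bflip i x i = !x i := by
  simp [bflip]

lemma bflip_apply_ne {n : ℕ} (i j : Fin n) (x : Fin n → Bool) (h : j ≠ i) :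
    bflip i x j = x j := by
  simp [bflip, Function.update_of_ne h]

lemma bflip_involutive {n : ℕ} (i : Fin n) : Function.Involutive (bflip i) := by
  intro x
  funext j
  by_cases h : j = i
  · subst h; simp [bflip]
  · simp [bflip_apply_ne _ _ _ h, bflip, Function.update_of_ne h]

lemma neighbors_bflip {n : ℕ} (i : Fin n) (x : Fin n → Bool) : Neighbors x (bflip i x) :=
  ⟨i, by simp [bflip], fun j hj => (bflip_apply_ne i j x hj).symm⟩

lemma weight_bflip {n : ℕ} (p : ℝ) (i : Fin n) (x : Fin n → Bool) :
    (if x i then 1 - p else p) * weight p x = (if x i then p else 1 - p) * weight p (bflip i x) := by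
  rw [weight, weight, ← Finset.mul_prod_erase univ _ (mem_univ i),
      ← Finset.mul_prod_erase univ (fun j => if bflip i x j then p else 1 - p) (mem_univ i)]
  have : ∏ j ∈ univ.erase i, (if bflip i x j then p else 1 - p)
      = ∏ j ∈ univ.erase i, (if x j then p else 1 - p) := by
    refine Finset.prod_congr rfl fun j hj => ?_
    rw [bflip_apply_ne i j x (Finset.mem_erase.mp hj).1]
  rw [this, bflip_apply_self]
  by_cases h : x i <;> simp [h] <;> ring

noncomputable def qq {n k : ℕ} (A : (Fin n → Bool) → PMF (Fin k → Fin n))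
    (x : Fin n → Bool) (j : Fin k) (i : Fin n) : ℝ :=
  prob (A x) {I | I j = i}

lemma qq_nonneg {n k : ℕ} (A : (Fin n → Bool) → PMF (Fin k → Fin n)) (x) (j) (i) :
    0 ≤ qq A x j i := ENNReal.toReal_nonneg

lemma qq_eq_sum {n k : ℕ} (A : (Fin n → Bool) → PMF (Fin k → Fin n)) (x) (j) (i) :
    qq A x j i = ∑ I : Fin k → Fin n, if I j = i then ((A x) I).toReal else 0 := by
  rw [qq, prob_eq_sum]
  rfl

lemma sum_qq {n k : ℕ} (A : (Fin n → Bool) → PMF (Fin k → Fin n)) (x) (j) :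
    ∑ i, qq A x j i = 1 := by
  simp only [qq_eq_sum]
  rw [Finset.sum_comm]
  rw [← sum_pmf_toReal (A x)]
  refine Finset.sum_congr rfl fun I _ => ?_
  simp

lemma inner_rewrite {n k : ℕ} (A : (Fin n → Bool) → PMF (Fin k → Fin n)) (x) (j) :
    ∑ I : Fin k → Fin n, ((A x) I).toReal * (if x (I j) then (1:ℝ) else 0)
      = ∑ i, if x i then qq A x j i else 0 := by
  simp only [qq_eq_sum]
  have key : ∀ i : Fin n, (if x i then ∑ I : Fin k → Fin n, (if I j = i then ((A x) I).toReal else 0) else 0)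
      = ∑ I : Fin k → Fin n, (if x i then (if I j = i then ((A x) I).toReal else 0) else 0) := by
    intro i; by_cases h : x i <;> simp [h]
  rw [Finset.sum_congr rfl fun i _ => key i, Finset.sum_comm]
  refine Finset.sum_congr rfl fun I _ => ?_
  rw [Finset.sum_eq_single (I j)]
  · by_cases h : x (I j) <;> simp [h]
  · intro i _ hne
    have : ¬ (I j = i) := fun hc => hne hc.symm
    by_cases h : x i <;> simp [h, this]
  · simp

section Main

variable {n k : ℕ} (A : (Fin n → Bool) → PMF (Fin k → Fin n)) (p : ℝ)

noncomputable def SS (j : Fin k) : ℝ :=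
  ∑ x : Fin n → Bool, weight p x * ∑ i, (if x i then qq A x j i else 0)

noncomputable def TT (j : Fin k) : ℝ :=
  ∑ x : Fin n → Bool, weight p x * ∑ i, (if x i then 0 else qq A x j i)

lemma SS_swap (j : Fin k) :
    SS A p j = ∑ i, ∑ x : Fin n → Bool, (if x i then weight p x * qq A x j i else 0) := by
  rw [SS, Finset.sum_comm]
  refine Finset.sum_congr rfl fun x _ => ?_
  rw [Finset.mul_sum]
  refine Finset.sum_congr rfl fun i _ => ?_
  by_cases h : x i <;> simp [h]

lemma TT_swap (j : Fin k) :
    TT A p j = ∑ i, ∑ x : Fin n → Bool, (if x i then 0 else weight p x * qq A x j i) := by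
  rw [TT, Finset.sum_comm]
  refine Finset.sum_congr rfl fun x _ => ?_
  rw [Finset.mul_sum]
  refine Finset.sum_congr rfl fun i _ => ?_
  by_cases h : x i <;> simp [h]

lemma SS_add_TT (j : Fin k) : SS A p j + TT A p j = 1 := by
  rw [SS, TT, ← Finset.sum_add_distrib]
  rw [← sum_weight (n := n) p]
  refine Finset.sum_congr rfl fun x _ => ?_
  rw [← mul_add, ← Finset.sum_add_distrib]
  have : ∑ i, ((if x i then qq A x j i else 0) + (if x i then 0 else qq A x j i)) = 1 := by
    rw [← sum_qq A x j]
    refine Finset.sum_congr rfl fun i _ => ?_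
    by_cases h : x i <;> simp [h]
  rw [this, mul_one]

end Main
lemma reindex_flip {n : ℕ} (i : Fin n) (G : (Fin n → Bool) → ℝ) :
    ∑ x : Fin n → Bool, (if x i then G (bflip i x) else 0)
      = ∑ x : Fin n → Bool, (if x i then 0 else G x) := by
  have := Function.Bijective.sum_comp (bflip_involutive i).bijective
    (fun y => if y i then (0:ℝ) else G y)
  rw [← this]
  refine Finset.sum_congr rfl fun x _ => ?_
  rw [bflip_apply_self]
  by_cases h : x i <;> simp [h]

lemma reindex_flip' {n : ℕ} (i : Fin n) (G : (Fin n → Bool) → ℝ) :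
    ∑ x : Fin n → Bool, (if x i then 0 else G (bflip i x))
      = ∑ x : Fin n → Bool, (if x i then G x else 0) := by
  have := Function.Bijective.sum_comp (bflip_involutive i).bijective
    (fun y => if y i then G y else 0)
  rw [← this]
  refine Finset.sum_congr rfl fun x _ => ?_
  rw [bflip_apply_self]
  by_cases h : x i <;> simp [h]

set_option linter.unusedSectionVars false

section Keys

variable {n k : ℕ} {A : (Fin n → Bool) → PMF (Fin k → Fin n)} {ε δ p : ℝ}
variable (hδ : 0 ≤ δ)
variable (hDP : ∀ x x', Neighbors x x' → ∀ T : Set (Fin k → Fin n),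
      prob (A x) T ≤ Real.exp ε * prob (A x') T + δ)
variable (hp0 : 0 < p) (hp1 : p < 1)

include hδ hDP hp0 hp1

lemma key_upper_i (j : Fin k) (i : Fin n) :
    ∑ x : Fin n → Bool, (if x i then (1 - p) * (weight p x * qq A x j i) else 0)
      ≤ Real.exp ε * p * (∑ x : Fin n → Bool, (if x i then 0 else weight p x * qq A x j i))
        + (1 - p) * δ * p := by
  have hterm : ∀ x : Fin n → Bool,
      (if x i then (1 - p) * (weight p x * qq A x j i) else 0)
        ≤ (if x i then Real.exp ε * p * (weight p (bflip i x) * qq A (bflip i x) j i) else 0)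
          + (if x i then (1 - p) * δ * weight p x else 0) := by
    intro x
    by_cases h : x i
    · simp only [if_pos h]
      have hq : qq A x j i ≤ Real.exp ε * qq A (bflip i x) j i + δ :=
        hDP x (bflip i x) (neighbors_bflip i x) {I | I j = i}
      have hw : (1 - p) * weight p x = p * weight p (bflip i x) := by
        have := weight_bflip p i x
        rw [if_pos h, if_pos h] at this
        exact this
      have hwnn : 0 ≤ weight p x := weight_nonneg hp0.le hp1.le x
      have hcnn : (0:ℝ) ≤ (1 - p) * weight p x := by nlinarith
      calc (1 - p) * (weight p x * qq A x j i)
          = (1 - p) * weight p x * qq A x j i := by ring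
        _ ≤ (1 - p) * weight p x * (Real.exp ε * qq A (bflip i x) j i + δ) :=
            mul_le_mul_of_nonneg_left hq hcnn
        _ = Real.exp ε * ((1 - p) * weight p x) * qq A (bflip i x) j i
              + (1 - p) * δ * weight p x := by ring
        _ = Real.exp ε * (p * weight p (bflip i x)) * qq A (bflip i x) j i
              + (1 - p) * δ * weight p x := by rw [hw]
        _ = Real.exp ε * p * (weight p (bflip i x) * qq A (bflip i x) j i)
              + (1 - p) * δ * weight p x := by ring
    · simp [h]
  calc ∑ x : Fin n → Bool, (if x i then (1 - p) * (weight p x * qq A x j i) else 0)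
      ≤ ∑ x : Fin n → Bool, ((if x i then Real.exp ε * p * (weight p (bflip i x) * qq A (bflip i x) j i) else 0)
          + (if x i then (1 - p) * δ * weight p x else 0)) :=
        Finset.sum_le_sum fun x _ => hterm x
    _ = (∑ x : Fin n → Bool, (if x i then Real.exp ε * p * (weight p (bflip i x) * qq A (bflip i x) j i) else 0))
          + ∑ x : Fin n → Bool, (if x i then (1 - p) * δ * weight p x else 0) :=
        Finset.sum_add_distrib
    _ = Real.exp ε * p * (∑ x : Fin n → Bool, (if x i then 0 else weight p x * qq A x j i))
          + (1 - p) * δ * p := by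
        congr 1
        · have hre : (∑ x : Fin n → Bool, (if x i then Real.exp ε * p * (weight p (bflip i x) * qq A (bflip i x) j i) else 0))
              = ∑ x : Fin n → Bool, (if x i then 0 else Real.exp ε * p * (weight p x * qq A x j i)) :=
            reindex_flip i (fun y => Real.exp ε * p * (weight p y * qq A y j i))
          rw [hre, Finset.mul_sum]
          refine Finset.sum_congr rfl fun x _ => ?_
          by_cases h : x i <;> simp [h]
        · have h2 : ∑ x : Fin n → Bool, (if x i then (1 - p) * δ * weight p x else 0)
              = (1 - p) * δ * ∑ x : Fin n → Bool, (if x i then weight p x else 0) := by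
            rw [Finset.mul_sum]
            refine Finset.sum_congr rfl fun x _ => ?_
            by_cases h : x i <;> simp [h]
          rw [h2, marg_true]

lemma key_lower_i (j : Fin k) (i : Fin n) :
    ∑ x : Fin n → Bool, (if x i then 0 else p * (weight p x * qq A x j i))
      ≤ Real.exp ε * (1 - p) * (∑ x : Fin n → Bool, (if x i then weight p x * qq A x j i else 0))
        + p * δ * (1 - p) := by
  have hterm : ∀ x : Fin n → Bool,
      (if x i then 0 else p * (weight p x * qq A x j i))
        ≤ (if x i then 0 else Real.exp ε * (1 - p) * (weight p (bflip i x) * qq A (bflip i x) j i))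
          + (if x i then 0 else p * δ * weight p x) := by
    intro x
    by_cases h : x i
    · simp [h]
    · simp only [if_neg h]
      have hq : qq A x j i ≤ Real.exp ε * qq A (bflip i x) j i + δ :=
        hDP x (bflip i x) (neighbors_bflip i x) {I | I j = i}
      have hw : p * weight p x = (1 - p) * weight p (bflip i x) := by
        have := weight_bflip p i x
        rw [if_neg h, if_neg h] at this
        exact this
      have hwnn : 0 ≤ weight p x := weight_nonneg hp0.le hp1.le x
      have hcnn : (0:ℝ) ≤ p * weight p x := by nlinarith
      calc p * (weight p x * qq A x j i)
          = p * weight p x * qq A x j i := by ring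
        _ ≤ p * weight p x * (Real.exp ε * qq A (bflip i x) j i + δ) :=
            mul_le_mul_of_nonneg_left hq hcnn
        _ = Real.exp ε * (p * weight p x) * qq A (bflip i x) j i
              + p * δ * weight p x := by ring
        _ = Real.exp ε * ((1 - p) * weight p (bflip i x)) * qq A (bflip i x) j i
              + p * δ * weight p x := by rw [hw]
        _ = Real.exp ε * (1 - p) * (weight p (bflip i x) * qq A (bflip i x) j i)
              + p * δ * weight p x := by ring
  calc ∑ x : Fin n → Bool, (if x i then 0 else p * (weight p x * qq A x j i))
      ≤ ∑ x : Fin n → Bool, ((if x i then 0 else Real.exp ε * (1 - p) * (weight p (bflip i x) * qq A (bflip i x) j i))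
          + (if x i then 0 else p * δ * weight p x)) :=
        Finset.sum_le_sum fun x _ => hterm x
    _ = (∑ x : Fin n → Bool, (if x i then 0 else Real.exp ε * (1 - p) * (weight p (bflip i x) * qq A (bflip i x) j i)))
          + ∑ x : Fin n → Bool, (if x i then 0 else p * δ * weight p x) :=
        Finset.sum_add_distrib
    _ = Real.exp ε * (1 - p) * (∑ x : Fin n → Bool, (if x i then weight p x * qq A x j i else 0))
          + p * δ * (1 - p) := by
        congr 1
        · have hre : (∑ x : Fin n → Bool, (if x i then 0 else Real.exp ε * (1 - p) * (weight p (bflip i x) * qq A (bflip i x) j i)))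
              = ∑ x : Fin n → Bool, (if x i then Real.exp ε * (1 - p) * (weight p x * qq A x j i) else 0) :=
            reindex_flip' i (fun y => Real.exp ε * (1 - p) * (weight p y * qq A y j i))
          rw [hre, Finset.mul_sum]
          refine Finset.sum_congr rfl fun x _ => ?_
          by_cases h : x i <;> simp [h]
        · have h2 : ∑ x : Fin n → Bool, (if x i then 0 else p * δ * weight p x)
              = p * δ * ∑ x : Fin n → Bool, (if x i then 0 else weight p x) := by
            rw [Finset.mul_sum]
            refine Finset.sum_congr rfl fun x _ => ?_
            by_cases h : x i <;> simp [h]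
          rw [h2, marg_false]

lemma key_upper (j : Fin k) :
    (1 - p) * SS A p j ≤ Real.exp ε * p * TT A p j + (n:ℝ) * (1 - p) * δ * p := by
  have hsum : ∑ i : Fin n, (1 - p) * (∑ x : Fin n → Bool, (if x i then weight p x * qq A x j i else 0))
      ≤ ∑ i : Fin n, (Real.exp ε * p * (∑ x : Fin n → Bool, (if x i then 0 else weight p x * qq A x j i))
          + (1 - p) * δ * p) := by
    refine Finset.sum_le_sum fun i _ => ?_
    have h0 : (1 - p) * (∑ x : Fin n → Bool, (if x i then weight p x * qq A x j i else 0))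
        = ∑ x : Fin n → Bool, (if x i then (1 - p) * (weight p x * qq A x j i) else 0) := by
      rw [Finset.mul_sum]
      refine Finset.sum_congr rfl fun x _ => ?_
      by_cases h : x i <;> simp [h]
    rw [h0]
    exact key_upper_i hδ hDP hp0 hp1 j i
  have hL : ∑ i : Fin n, (1 - p) * (∑ x : Fin n → Bool, (if x i then weight p x * qq A x j i else 0))
      = (1 - p) * SS A p j := by
    rw [SS_swap, Finset.mul_sum]
  have hR : ∑ i : Fin n, (Real.exp ε * p * (∑ x : Fin n → Bool, (if x i then 0 else weight p x * qq A x j i))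
          + (1 - p) * δ * p)
      = Real.exp ε * p * TT A p j + (n:ℝ) * ((1 - p) * δ * p) := by
    rw [Finset.sum_add_distrib, ← Finset.mul_sum, ← TT_swap, Finset.sum_const, card_univ]
    simp [nsmul_eq_mul]
  rw [hL, hR] at hsum
  linarith

lemma key_lower (j : Fin k) :
    p * TT A p j ≤ Real.exp ε * (1 - p) * SS A p j + (n:ℝ) * p * δ * (1 - p) := by
  have hsum : ∑ i : Fin n, p * (∑ x : Fin n → Bool, (if x i then 0 else weight p x * qq A x j i))
      ≤ ∑ i : Fin n, (Real.exp ε * (1 - p) * (∑ x : Fin n → Bool, (if x i then weight p x * qq A x j i else 0))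
          + p * δ * (1 - p)) := by
    refine Finset.sum_le_sum fun i _ => ?_
    have h0 : p * (∑ x : Fin n → Bool, (if x i then 0 else weight p x * qq A x j i))
        = ∑ x : Fin n → Bool, (if x i then 0 else p * (weight p x * qq A x j i)) := by
      rw [Finset.mul_sum]
      refine Finset.sum_congr rfl fun x _ => ?_
      by_cases h : x i <;> simp [h]
    rw [h0]
    exact key_lower_i hδ hDP hp0 hp1 j i
  have hL : ∑ i : Fin n, p * (∑ x : Fin n → Bool, (if x i then 0 else weight p x * qq A x j i))
      = p * TT A p j := by
    rw [TT_swap, Finset.mul_sum]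
  have hR : ∑ i : Fin n, (Real.exp ε * (1 - p) * (∑ x : Fin n → Bool, (if x i then weight p x * qq A x j i else 0))
          + p * δ * (1 - p))
      = Real.exp ε * (1 - p) * SS A p j + (n:ℝ) * (p * δ * (1 - p)) := by
    rw [Finset.sum_add_distrib, ← Finset.mul_sum, ← SS_swap, Finset.sum_const, card_univ]
    simp [nsmul_eq_mul]
  rw [hL, hR] at hsum
  linarith

end Keys

/-- For an `(ε,δ)`-DP selection mechanism `A : {0,1}^n → [n]^k` and
`X` drawn from the product Bernoulli(`p`) distribution, the expected fraction
`Z = (1/k)·∑_{j} 1[X_{I_j} = 1]` of selected coordinates that equal 1 (expectation over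
`X` and the randomness of `A`) satisfies
`(p − n·p·(1−p)·δ)/(p + (1−p)·e^ε) ≤ E[Z] ≤ (p·e^ε + n·p·(1−p)·δ)/(1 − p + p·e^ε)`. -/
theorem stmt4 (n k : ℕ) (hk : 0 < k) (ε δ : ℝ) (hε : 0 ≤ ε) (hδ : 0 ≤ δ)
    (A : (Fin n → Bool) → PMF (Fin k → Fin n))
    (hDP : ∀ x x', Neighbors x x' → ∀ T : Set (Fin k → Fin n),
      prob (A x) T ≤ Real.exp ε * prob (A x') T + δ)
    (p : ℝ) (hp0 : 0 < p) (hp1 : p < 1) :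
    (p - (n:ℝ) * p * (1 - p) * δ) / (p + (1 - p) * Real.exp ε) ≤
      (∑ x : Fin n → Bool, weight p x *
        ∑ I : Fin k → Fin n, ((A x) I).toReal *
          ((1 / (k:ℝ)) * ∑ j : Fin k, (if x (I j) then (1:ℝ) else 0))) ∧
    (∑ x : Fin n → Bool, weight p x *
        ∑ I : Fin k → Fin n, ((A x) I).toReal *
          ((1 / (k:ℝ)) * ∑ j : Fin k, (if x (I j) then (1:ℝ) else 0)))
      ≤ (p * Real.exp ε + (n:ℝ) * p * (1 - p) * δ) / (1 - p + p * Real.exp ε) := by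
  have hexp : 0 < Real.exp ε := Real.exp_pos ε
  have hk0 : (0:ℝ) < (k:ℝ) := by exact_mod_cast hk
  -- rewrite the expectation as (1/k) * ∑ j, SS A p j
  have hx : ∀ x : Fin n → Bool, weight p x *
        (∑ I : Fin k → Fin n, ((A x) I).toReal *
          ((1 / (k:ℝ)) * ∑ j : Fin k, (if x (I j) then (1:ℝ) else 0)))
      = (1 / (k:ℝ)) * ∑ j : Fin k, weight p x *
          ∑ I : Fin k → Fin n, ((A x) I).toReal * (if x (I j) then (1:ℝ) else 0) := by
    intro x
    have h1 : ∀ I : Fin k → Fin n, ((A x) I).toReal *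
          ((1 / (k:ℝ)) * ∑ j : Fin k, (if x (I j) then (1:ℝ) else 0))
        = (1 / (k:ℝ)) * ∑ j : Fin k, ((A x) I).toReal * (if x (I j) then (1:ℝ) else 0) := by
      intro I
      calc ((A x) I).toReal * ((1 / (k:ℝ)) * ∑ j : Fin k, (if x (I j) then (1:ℝ) else 0))
          = (1 / (k:ℝ)) * (((A x) I).toReal * ∑ j : Fin k, (if x (I j) then (1:ℝ) else 0)) := by ring
        _ = (1 / (k:ℝ)) * ∑ j : Fin k, ((A x) I).toReal * (if x (I j) then (1:ℝ) else 0) := by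
            rw [Finset.mul_sum]
    rw [Finset.sum_congr rfl fun I _ => h1 I, ← Finset.mul_sum, Finset.sum_comm, ← Finset.mul_sum]
    ring
  have hE : (∑ x : Fin n → Bool, weight p x *
        ∑ I : Fin k → Fin n, ((A x) I).toReal *
          ((1 / (k:ℝ)) * ∑ j : Fin k, (if x (I j) then (1:ℝ) else 0)))
      = (1 / (k:ℝ)) * ∑ j : Fin k, SS A p j := by
    rw [Finset.sum_congr rfl fun x _ => hx x, ← Finset.mul_sum, Finset.sum_comm]
    congr 1
    refine Finset.sum_congr rfl fun j _ => ?_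
    rw [SS]
    refine Finset.sum_congr rfl fun x _ => ?_
    rw [inner_rewrite]
  have hUden : (0:ℝ) < 1 - p + p * Real.exp ε := by nlinarith
  have hLden : (0:ℝ) < p + (1 - p) * Real.exp ε := by nlinarith
  have hSU : ∀ j : Fin k, SS A p j
      ≤ (p * Real.exp ε + (n:ℝ) * p * (1 - p) * δ) / (1 - p + p * Real.exp ε) := by
    intro j
    have hu := key_upper hδ hDP hp0 hp1 j
    have hST := SS_add_TT A p j
    have hT : TT A p j = 1 - SS A p j := by linarith
    rw [hT] at hu
    rw [le_div_iff₀ hUden]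
    nlinarith [hu]
  have hSL : ∀ j : Fin k,
      (p - (n:ℝ) * p * (1 - p) * δ) / (p + (1 - p) * Real.exp ε) ≤ SS A p j := by
    intro j
    have hl := key_lower hδ hDP hp0 hp1 j
    have hST := SS_add_TT A p j
    have hT : TT A p j = 1 - SS A p j := by linarith
    rw [hT] at hl
    rw [div_le_iff₀ hLden]
    nlinarith [hl]
  rw [hE]
  constructor
  · have hsum : (k:ℝ) * ((p - (n:ℝ) * p * (1 - p) * δ) / (p + (1 - p) * Real.exp ε))
        ≤ ∑ j : Fin k, SS A p j := by
      calc (k:ℝ) * ((p - (n:ℝ) * p * (1 - p) * δ) / (p + (1 - p) * Real.exp ε))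
          = ∑ _j : Fin k, (p - (n:ℝ) * p * (1 - p) * δ) / (p + (1 - p) * Real.exp ε) := by
            rw [Finset.sum_const, card_univ]
            simp [nsmul_eq_mul]
        _ ≤ ∑ j : Fin k, SS A p j := Finset.sum_le_sum fun j _ => hSL j
    have := mul_le_mul_of_nonneg_left hsum (by positivity : (0:ℝ) ≤ 1 / (k:ℝ))
    calc (p - (n:ℝ) * p * (1 - p) * δ) / (p + (1 - p) * Real.exp ε)
        = (1 / (k:ℝ)) * ((k:ℝ) * ((p - (n:ℝ) * p * (1 - p) * δ) / (p + (1 - p) * Real.exp ε))) := by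
          field_simp
      _ ≤ (1 / (k:ℝ)) * ∑ j : Fin k, SS A p j := this
  · have hsum : ∑ j : Fin k, SS A p j
        ≤ (k:ℝ) * ((p * Real.exp ε + (n:ℝ) * p * (1 - p) * δ) / (1 - p + p * Real.exp ε)) := by
      calc ∑ j : Fin k, SS A p j
          ≤ ∑ _j : Fin k, (p * Real.exp ε + (n:ℝ) * p * (1 - p) * δ) / (1 - p + p * Real.exp ε) :=
            Finset.sum_le_sum fun j _ => hSU j
        _ = (k:ℝ) * ((p * Real.exp ε + (n:ℝ) * p * (1 - p) * δ) / (1 - p + p * Real.exp ε)) := by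
            rw [Finset.sum_const, card_univ]
            simp [nsmul_eq_mul]
    have := mul_le_mul_of_nonneg_left hsum (by positivity : (0:ℝ) ≤ 1 / (k:ℝ))
    calc (1 / (k:ℝ)) * ∑ j : Fin k, SS A p j
        ≤ (1 / (k:ℝ)) * ((k:ℝ) * ((p * Real.exp ε + (n:ℝ) * p * (1 - p) * δ) / (1 - p + p * Real.exp ε))) := this
      _ = (p * Real.exp ε + (n:ℝ) * p * (1 - p) * δ) / (1 - p + p * Real.exp ε) := by
          field_simp
end

section
/- For any ε ≥ 0 and any 1 ≤ k ≤ n, the randomized-response selection mechanism RR : {0,1}^n → [n]^k with flip probability 1/(1+e^ε) is (ε, 0)-differentially private: for any two inputs x, x' ∈ {0,1}^n differing in exactly one coordinate and any set T of outputs, Pr[RR(x) ∈ T] ≤ e^ε · Pr[RR(x') ∈ T]. -/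
/-! Randomized response is a post-processing of the flipped string `y = x ⊕ f`, whose
probability `∏ i, flip(x i ⊕ y i)` changes only in the factor at the coordinate where the
neighbors `x, x'` differ. Each flip probability is `1/(1+e^ε)` or `e^ε/(1+e^ε)`, so that factor
changes by a ratio of at most `e^ε`; post-processing by `rrSelect` cannot increase this ratio. -/

open MeasureTheory

/-- The distribution of `n` i.i.d. samples from `μ`. -/
noncomputable def pmfPi {α : Type*} : (n : ℕ) → PMF α → PMF (Fin n → α)
  | 0, _ => PMF.pure (fun i => i.elim0)
  | n+1, μ => μ.bind fun b => (pmfPi n μ).bind fun g => PMF.pure (Fin.cons b g)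

/-- Bernoulli distribution on `Bool` with success probability `1/(1+e^ε)`
(the flip probability of randomized response). -/
noncomputable def flipPMF (ε : ℝ) : PMF Bool :=
  PMF.bernoulli (Real.toNNReal (1 / (1 + Real.exp ε)))
    (by
      rw [Real.toNNReal_le_one, div_le_one (by positivity)]
      nlinarith [Real.exp_pos ε])

/-- Given the flipped string `y`, output the selected set: if
`S = {i : y i = 1}` has at least `k` elements, a uniformly random `k`-subset of
`S`; otherwise `S` together with a uniformly random `(k−|S|)`-subset of its
complement.  (The selected indices are "ordered arbitrarily", so the output is
modeled as the set of `k` selected indices.) -/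
noncomputable def rrSelect (n k : ℕ) (hk : k ≤ n) (y : Fin n → Bool) :
    PMF (Finset (Fin n)) :=
  if h : k ≤ (Finset.univ.filter fun i => y i = true).card then
    PMF.uniformOfFinset ((Finset.univ.filter fun i => y i = true).powersetCard k)
      (Finset.powersetCard_nonempty.2 h)
  else
    (PMF.uniformOfFinset
        ((Finset.univ.filter fun i => y i = true)ᶜ.powersetCard
          (k - (Finset.univ.filter fun i => y i = true).card))
        (Finset.powersetCard_nonempty.2 (by
          rw [Finset.card_compl, Fintype.card_fin]; omega))).map
      fun T => (Finset.univ.filter fun i => y i = true) ∪ T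

/-- The randomized-response selection mechanism `RR : {0,1}^n → [n]^k` with flip
probability `1/(1+e^ε)`: flip each bit of `x` independently with probability
`1/(1+e^ε)`, then select as in `rrSelect`. -/
noncomputable def RR (n k : ℕ) (hk : k ≤ n) (ε : ℝ) (x : Fin n → Bool) :
    PMF (Finset (Fin n)) :=
  (pmfPi n (flipPMF ε)).bind fun f => rrSelect n k hk fun i => xor (x i) (f i)

open scoped ENNReal

lemma pmfPi_apply {α : Type*} (n : ℕ) (μ : PMF α) (f : Fin n → α) :
    pmfPi n μ f = ∏ i, μ (f i) := by
  induction n with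
  | zero => rw [pmfPi, PMF.pure_apply, if_pos (Subsingleton.elim _ _)]; simp
  | succ n ih =>
    have hpure : ∀ b g, (b, g) ≠ (f 0, Fin.tail f) →
        PMF.pure (Fin.cons b g : Fin (n + 1) → α) f = 0 :=
      fun b g hne => PMF.pure_apply_of_ne _ _ fun h => hne (by subst h; simp)
    rw [pmfPi, PMF.bind_apply, tsum_eq_single (f 0) fun b hb => ?_, PMF.bind_apply,
      tsum_eq_single (Fin.tail f) fun g hg => ?_, Fin.cons_self_tail, PMF.pure_apply_self, mul_one,
      ih, Fin.prod_univ_succ]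
    · rfl
    · rw [hpure _ _ (by simp [hg]), mul_zero]
    · rw [PMF.bind_apply, mul_eq_zero_of_right]
      exact ENNReal.tsum_eq_zero.2 fun g => by rw [hpure _ _ (by simp [hb]), mul_zero]

lemma flipPMF_apply (ε : ℝ) (b : Bool) :
    flipPMF ε b = ENNReal.ofReal (cond b 1 (Real.exp ε) / (1 + Real.exp ε)) := by
  cases b with
  | true => rfl
  | false =>
    change 1 - ENNReal.ofReal (1 / (1 + Real.exp ε)) = _
    rw [cond_false, ← ENNReal.ofReal_one, ← ENNReal.ofReal_sub _ (by positivity)]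
    congr 1
    field_simp
    ring

lemma flipPMF_le_exp_mul {ε : ℝ} (hε : 0 ≤ ε) (b b' : Bool) :
    flipPMF ε b ≤ ENNReal.ofReal (Real.exp ε) * flipPMF ε b' := by
  have hexp : 1 ≤ Real.exp ε := Real.one_le_exp hε
  rw [flipPMF_apply, flipPMF_apply, ← ENNReal.ofReal_mul (Real.exp_nonneg ε), mul_div_assoc']
  refine ENNReal.ofReal_le_ofReal (div_le_div_of_nonneg_right ?_ (by positivity))
  cases b <;> cases b' <;> simp only [cond_true, cond_false] <;> nlinarith

lemma Neighbors.prod_le_mul_prod {Z : Type*} {n : ℕ} {x x' : Fin n → Z} (hxx' : Neighbors x x')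
    {φ : Fin n → Z → ℝ≥0∞} {c : ℝ≥0∞} (hφ : ∀ j z z', φ j z ≤ c * φ j z') :
    ∏ j, φ j (x j) ≤ c * ∏ j, φ j (x' j) := by
  obtain ⟨i, -, hx⟩ := hxx'
  rw [← Finset.mul_prod_erase _ _ (Finset.mem_univ i),
    ← Finset.mul_prod_erase _ (fun j => φ j (x' j)) (Finset.mem_univ i), ← mul_assoc]
  refine mul_le_mul' (hφ i _ _) (Finset.prod_le_prod' fun j hj => ?_)
  rw [hx j (Finset.ne_of_mem_erase hj)]

lemma PMF.toOuterMeasure_bind_le_mul {α β : Type*} {p q : PMF α} {c : ℝ≥0∞}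
    (hpq : ∀ a, p a ≤ c * q a) (g : α → PMF β) (T : Set β) :
    (p.bind g).toOuterMeasure T ≤ c * (q.bind g).toOuterMeasure T := by
  rw [PMF.toOuterMeasure_bind_apply, PMF.toOuterMeasure_bind_apply, ← ENNReal.tsum_mul_left]
  exact ENNReal.tsum_le_tsum fun a => by rw [← mul_assoc]; exact mul_le_mul_left (hpq a) _

lemma prob_le_mul_of_toOuterMeasure_le {α : Type*} {μ ν : PMF α} {T : Set α} {c : ℝ}
    (hc : 0 ≤ c) (h : μ.toOuterMeasure T ≤ ENNReal.ofReal c * ν.toOuterMeasure T) :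
    prob μ T ≤ c * prob ν T := by
  have hν : ν.toOuterMeasure T ≠ ∞ :=
    ne_top_of_le_ne_top ENNReal.one_ne_top <| (ν.toOuterMeasure.mono (Set.subset_univ T)).trans_eq
      ((PMF.toOuterMeasure_apply_eq_one_iff _ _).2 (Set.subset_univ _))
  calc prob μ T ≤ (ENNReal.ofReal c * ν.toOuterMeasure T).toReal :=
        ENNReal.toReal_mono (ENNReal.mul_ne_top ENNReal.ofReal_ne_top hν) h
    _ = c * prob ν T := by rw [ENNReal.toReal_mul, ENNReal.toReal_ofReal hc, prob]

noncomputable def flippedInput (ε : ℝ) {n : ℕ} (x : Fin n → Bool) : PMF (Fin n → Bool) :=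
  (pmfPi n (flipPMF ε)).map fun f i => xor (x i) (f i)

lemma flippedInput_apply (ε : ℝ) {n : ℕ} (x y : Fin n → Bool) :
    flippedInput ε x y = ∏ i, flipPMF ε (xor (x i) (y i)) := by
  rw [flippedInput, PMF.map_apply, ← pmfPi_apply,
    tsum_eq_single (fun i => xor (x i) (y i)), if_pos (by simp)]
  rintro f hf
  exact if_neg fun h => hf (by simp [h])

lemma flippedInput_le_exp_mul {ε : ℝ} (hε : 0 ≤ ε) {n : ℕ} {x x' : Fin n → Bool}
    (hxx' : Neighbors x x') (y : Fin n → Bool) :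
    flippedInput ε x y ≤ ENNReal.ofReal (Real.exp ε) * flippedInput ε x' y := by
  simpa only [flippedInput_apply] using
    hxx'.prod_le_mul_prod (φ := fun j z => flipPMF ε (xor z (y j)))
      fun _ _ _ => flipPMF_le_exp_mul hε _ _

lemma RR_eq_bind_flippedInput (n k : ℕ) (hkn : k ≤ n) (ε : ℝ) (x : Fin n → Bool) :
    RR n k hkn ε x = (flippedInput ε x).bind (rrSelect n k hkn) := by
  rw [flippedInput, PMF.bind_map]
  rfl

theorem stmt9_general (ε : ℝ) (hε : 0 ≤ ε) (n k : ℕ) (hkn : k ≤ n)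
    (x x' : Fin n → Bool) (hxx' : Neighbors x x') (T : Set (Finset (Fin n))) :
    prob (RR n k hkn ε x) T ≤ Real.exp ε * prob (RR n k hkn ε x') T := by
  refine prob_le_mul_of_toOuterMeasure_le (Real.exp_nonneg ε) ?_
  rw [RR_eq_bind_flippedInput, RR_eq_bind_flippedInput]
  exact PMF.toOuterMeasure_bind_le_mul (flippedInput_le_exp_mul hε hxx') _ T

/-- For any `ε ≥ 0` and `1 ≤ k ≤ n`, the randomized-response
selection mechanism with flip probability `1/(1+e^ε)` is `(ε,0)`-differentially
private: for neighboring `x, x'` and any set `T` of outputs,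
`Pr[RR(x) ∈ T] ≤ e^ε · Pr[RR(x') ∈ T]`. -/
theorem stmt9 (ε : ℝ) (hε : 0 ≤ ε) (n k : ℕ) (hk1 : 1 ≤ k) (hkn : k ≤ n)
    (x x' : Fin n → Bool) (hxx' : Neighbors x x') (T : Set (Finset (Fin n))) :
    prob (RR n k hkn ε x) T ≤ Real.exp ε * prob (RR n k hkn ε x') T :=
  stmt9_general ε hε n k hkn x x' hxx' T
end
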